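/- arXiv:1206.5389 — 2 statements merged into one kernel-verified Lean document; each statement's English description precedes it below -/
import Mathlib

section
/- In Weissman's action-dependent state model with a rewrite option over a BSC with crossover probability delta: the strategy placing probability 1/2 on each of the two action-strategy pairs (B=0, rewrite 0 if S=1 else no-rewrite) and (B=1, rewrite 1 if S=0 else no-rewrite) achieves I(B A_2; Y) = 1 - H_2(delta^2). -/
open scoped BigOperators

noncomputable def ent {Ω : Type*} [Fintype Ω] (p : Ω → ℝ) : ℝ :=
  -∑ ω, p ω * Real.logb 2 (p ω)

noncomputable def pmfMap {Ω γ : Type*} [Fintype Ω] [DecidableEq γ]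
    (p : Ω → ℝ) (f : Ω → γ) : γ → ℝ :=
  fun c => ∑ ω, if f ω = c then p ω else 0

noncomputable def entOf {Ω γ : Type*} [Fintype Ω] [Fintype γ] [DecidableEq γ]
    (p : Ω → ℝ) (f : Ω → γ) : ℝ :=
  ent (pmfMap p f)

noncomputable def condEnt {Ω γ δ : Type*} [Fintype Ω] [Fintype γ] [DecidableEq γ]
    [Fintype δ] [DecidableEq δ] (p : Ω → ℝ) (f : Ω → γ) (g : Ω → δ) : ℝ :=
  entOf p (fun ω => (f ω, g ω)) - entOf p g

noncomputable def mutInf {Ω γ δ : Type*} [Fintype Ω] [Fintype γ] [DecidableEq γ]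
    [Fintype δ] [DecidableEq δ] (p : Ω → ℝ) (f : Ω → γ) (g : Ω → δ) : ℝ :=
  entOf p f + entOf p g - entOf p (fun ω => (f ω, g ω))

noncomputable def condMI {Ω γ δ ρ : Type*} [Fintype Ω] [Fintype γ] [DecidableEq γ]
    [Fintype δ] [DecidableEq δ] [Fintype ρ] [DecidableEq ρ]
    (p : Ω → ℝ) (f : Ω → γ) (g : Ω → δ) (h : Ω → ρ) : ℝ :=
  condEnt p f h - condEnt p f (fun ω => (g ω, h ω))

def IsPMF {Ω : Type*} [Fintype Ω] (p : Ω → ℝ) : Prop :=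
  (∀ ω, 0 ≤ p ω) ∧ ∑ ω, p ω = 1

noncomputable def binH (x : ℝ) : ℝ :=
  -(x * Real.logb 2 x) - (1 - x) * Real.logb 2 (1 - x)

noncomputable def bern (ε : ℝ) : Bool → ℝ := fun z => if z then ε else 1 - ε

/-- Channel output for the rewrite model:  `S = B ⊕ N₁` (BSC(δ)), `X = A₂(S)`;
if `X = N` (`none`) then `Y = S`, else `Y = X ⊕ N₂` (BSC(δ)). -/
def out10 (t : Bool × (Bool → Option Bool)) (n1 n2 : Bool) : Bool :=
  let s := xor t.1 n1
  match t.2 s with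
  | none => s
  | some v => xor v n2

/-- Probability 1/2 on each of the action-strategy pairs `(B=0, N0)` and `(B=1, 1N)`. -/
noncomputable def q10 : Bool × (Bool → Option Bool) → ℝ :=
  fun t => if t = (false, fun s => if s then some false else none) then 1/2
    else if t = (true, fun s => if s then none else some true) then 1/2 else 0

/-- Joint law of `((B,A₂), Y)` under `q10` and independent BSC(δ) noises. -/
noncomputable def p10 (δ : ℝ) : (Bool × (Bool → Option Bool)) × Bool → ℝ :=
  fun ω => q10 ω.1 * ∑ n1 : Bool, ∑ n2 : Bool,
    bern δ n1 * bern δ n2 * (if out10 ω.1 n1 n2 = ω.2 then 1 else 0)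

/-! ### Auxiliary material -/

def tA : Bool × (Bool → Option Bool) := (false, fun s => if s then some false else none)
def tB : Bool × (Bool → Option Bool) := (true, fun s => if s then none else some true)

lemma tA_ne_tB : tA ≠ tB := by simp [tA, tB]

lemma p10_eq (δ : ℝ) (ω : (Bool × (Bool → Option Bool)) × Bool) :
    p10 δ ω = if ω.1 = tA then (if ω.2 then δ^2/2 else (1-δ^2)/2)
      else if ω.1 = tB then (if ω.2 then (1-δ^2)/2 else δ^2/2) else 0 := by
  obtain ⟨t, y⟩ := ω
  by_cases h1 : t = tA
  · subst h1; cases y <;> simp [p10, q10, tA, tB, out10, bern, Fintype.sum_bool] <;> ring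
  · by_cases h2 : t = tB
    · subst h2; cases y <;> simp [p10, q10, tA, tB, out10, bern, Fintype.sum_bool, h1] <;> ring
    · have h1' : t ≠ (false, fun s => if s then some false else none) := h1
      have h2' : t ≠ (true, fun s => if s then none else some true) := h2
      simp [p10, q10, h1', h2', tA, tB]

lemma sum2 {Ω : Type*} [Fintype Ω] [DecidableEq Ω] (F : Ω → ℝ) (w1 w2 : Ω)
    (h12 : w1 ≠ w2) (h0 : ∀ ω, ω ≠ w1 → ω ≠ w2 → F ω = 0) :
    ∑ ω, F ω = F w1 + F w2 := by
  have : ∑ ω, F ω = ∑ ω ∈ ({w1, w2} : Finset Ω), F ω := by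
    refine (Finset.sum_subset (Finset.subset_univ _) ?_).symm
    intro x _ hx
    simp only [Finset.mem_insert, Finset.mem_singleton, not_or] at hx
    exact h0 x hx.1 hx.2
  rw [this, Finset.sum_insert (by simp [h12]), Finset.sum_singleton]

lemma sum4 {Ω : Type*} [Fintype Ω] [DecidableEq Ω] (F : Ω → ℝ) (w1 w2 w3 w4 : Ω)
    (h12 : w1 ≠ w2) (h13 : w1 ≠ w3) (h14 : w1 ≠ w4)
    (h23 : w2 ≠ w3) (h24 : w2 ≠ w4) (h34 : w3 ≠ w4)
    (h0 : ∀ ω, ω ≠ w1 → ω ≠ w2 → ω ≠ w3 → ω ≠ w4 → F ω = 0) :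
    ∑ ω, F ω = F w1 + F w2 + F w3 + F w4 := by
  have : ∑ ω, F ω = ∑ ω ∈ ({w1, w2, w3, w4} : Finset Ω), F ω := by
    refine (Finset.sum_subset (Finset.subset_univ _) ?_).symm
    intro x _ hx
    simp only [Finset.mem_insert, Finset.mem_singleton, not_or] at hx
    exact h0 x hx.1 hx.2.1 hx.2.2.1 hx.2.2.2
  rw [this, Finset.sum_insert (by simp [h12, h13, h14]),
    Finset.sum_insert (by simp [h23, h24]), Finset.sum_insert (by simp [h34]),
    Finset.sum_singleton]
  ring

lemma logb_half_arg (a : ℝ) : Real.logb 2 (a / 2) = Real.logb 2 a - 1 ∨ a = 0 := by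
  by_cases h : a = 0
  · exact Or.inr h
  · left
    rw [Real.logb_div h (by norm_num)]
    norm_num [Real.logb_self_eq_one]

lemma mul_logb_half (a : ℝ) : a * Real.logb 2 (a / 2) = a * Real.logb 2 a - a := by
  rcases logb_half_arg a with h | h
  · rw [h]; ring
  · simp [h]

lemma logb_two_half : Real.logb 2 (1 / 2 : ℝ) = -1 := by
  have := mul_logb_half (1 : ℝ)
  simpa using this

/-- In Weissman's rewrite model over a BSC(δ), the strategy putting mass 1/2 on
`(0, N0)` and `(1, 1N)` achieves `I(B A₂; Y) = 1 - H₂(δ²)`. -/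
theorem stmt10 (δ : ℝ) (hδ : δ ∈ Set.Icc (0:ℝ) 1) :
    mutInf (p10 δ) Prod.fst Prod.snd = 1 - binH (δ ^ 2) := by
  have hne : (tA, false) ≠ (tA, true) := by simp
  have hAB : tA ≠ tB := tA_ne_tB
  -- marginal of fst
  have Mfst : ∀ t, pmfMap (p10 δ) Prod.fst t
      = if t = tA then 1/2 else if t = tB then 1/2 else 0 := by
    intro t
    rw [pmfMap]
    rw [sum4 _ (tA, false) (tA, true) (tB, false) (tB, true)
      (by simp) (by simp [hAB]) (by simp [hAB]) (by simp [hAB]) (by simp [hAB]) (by simp)]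
    · by_cases h1 : t = tA
      · subst h1; simp [p10_eq, hAB, hAB.symm]; ring
      · by_cases h2 : t = tB
        · subst h2; simp [p10_eq, hAB, hAB.symm, h1, Ne.symm h1]; ring
        · simp [Ne.symm h1, Ne.symm h2, h1, h2]
    · intro ω h1 h2 h3 h4
      obtain ⟨t', y'⟩ := ω
      have ha : t' ≠ tA := by rintro rfl; cases y' <;> simp_all
      have hb : t' ≠ tB := by rintro rfl; cases y' <;> simp_all
      simp [p10_eq, ha, hb]
  -- marginal of snd
  have Msnd : ∀ y, pmfMap (p10 δ) Prod.snd y = 1/2 := by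
    intro y
    rw [pmfMap]
    rw [sum4 _ (tA, false) (tA, true) (tB, false) (tB, true)
      (by simp) (by simp [hAB]) (by simp [hAB]) (by simp [hAB]) (by simp [hAB]) (by simp)]
    · cases y <;> simp [p10_eq, hAB, hAB.symm] <;> ring
    · intro ω h1 h2 h3 h4
      obtain ⟨t', y'⟩ := ω
      have ha : t' ≠ tA := by rintro rfl; cases y' <;> simp_all
      have hb : t' ≠ tB := by rintro rfl; cases y' <;> simp_all
      simp [p10_eq, ha, hb]
  -- joint pmf
  have Mjoint : pmfMap (p10 δ) (fun ω => (Prod.fst ω, Prod.snd ω)) = p10 δ := by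
    funext c
    rw [pmfMap]
    simp only [Prod.mk.eta]
    rw [Finset.sum_ite_eq' Finset.univ c (p10 δ)]
    simp
  -- entropy of fst
  have Hfst : entOf (p10 δ) Prod.fst = 1 := by
    rw [entOf, ent]
    rw [sum2 _ tA tB hAB]
    · simp [Mfst, hAB, Ne.symm hAB, logb_two_half]; ring
    · intro t h1 h2; simp [Mfst, h1, h2]
  -- entropy of snd
  have Hsnd : entOf (p10 δ) Prod.snd = 1 := by
    rw [entOf, ent, Fintype.sum_bool]
    simp [Msnd, logb_two_half]; ring
  -- entropy of joint
  have Hjoint : entOf (p10 δ) (fun ω => (Prod.fst ω, Prod.snd ω)) = 1 + binH (δ ^ 2) := by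
    rw [entOf, Mjoint, ent]
    rw [sum4 _ (tA, false) (tA, true) (tB, false) (tB, true)
      (by simp) (by simp [hAB]) (by simp [hAB]) (by simp [hAB]) (by simp [hAB]) (by simp)]
    · simp only [p10_eq, hAB, Ne.symm hAB]
      simp [hAB]
      have e1 := mul_logb_half (δ ^ 2)
      have e2 := mul_logb_half (1 - δ ^ 2)
      rw [binH]
      linarith [e1, e2]
    · intro ω h1 h2 h3 h4
      obtain ⟨t', y'⟩ := ω
      have ha : t' ≠ tA := by rintro rfl; cases y' <;> simp_all
      have hb : t' ≠ tB := by rintro rfl; cases y' <;> simp_all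
      simp [p10_eq, ha, hb]
  rw [mutInf, Hfst, Hsnd, Hjoint]
  ring
end

section
/- In the degenerate causal relay network of Example (nodes 2,4 removed; Y_3 = (X_1, Z) with Z uniform binary independent of everything, Y_5 = Z), the cut-set bound with code functions gives I(X_1, A_3; Y_5 | A_5) = 0 for every joint distribution of (X_1, A_3, A_5) independent of Z, while the weakened bound I(X_1, X_3, Y_3; Y_5 | A_5) can equal 1 bit (achieved when relevant variables reveal Z). -/
open scoped BigOperators

lemma pmfMap_nonneg {Ω γ : Type*} [Fintype Ω] [DecidableEq γ]
    (p : Ω → ℝ) (hp : ∀ ω, 0 ≤ p ω) (f : Ω → γ) (c : γ) : 0 ≤ pmfMap p f c := by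
  unfold pmfMap
  exact Finset.sum_nonneg fun ω _ => by split <;> simp [hp ω]

lemma pmfMap_sum {Ω γ : Type*} [Fintype Ω] [Fintype γ] [DecidableEq γ]
    (p : Ω → ℝ) (f : Ω → γ) : ∑ c, pmfMap p f c = ∑ ω, p ω := by
  unfold pmfMap
  rw [Finset.sum_comm]
  exact Finset.sum_congr rfl fun ω _ => by simp

lemma entOf_comp {Ω γ δ : Type*} [Fintype Ω] [Fintype γ] [DecidableEq γ]
    [Fintype δ] [DecidableEq δ] (p : Ω → ℝ) (g : Ω → γ) (i : γ → δ)
    (hi : Function.Injective i) :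
    entOf p (fun ω => i (g ω)) = entOf p g := by
  unfold entOf ent
  congr 1
  have h1 : ∀ c, pmfMap p (fun ω => i (g ω)) (i c) = pmfMap p g c := by
    intro c; unfold pmfMap
    exact Finset.sum_congr rfl fun ω _ => by simp [hi.eq_iff]
  have h2 : ∀ d, d ∉ Finset.univ.image i → pmfMap p (fun ω => i (g ω)) d = 0 := by
    intro d hd
    unfold pmfMap
    apply Finset.sum_eq_zero
    intro ω _
    have : i (g ω) ≠ d := by
      intro h; exact hd (by simpa [← h] using Finset.mem_image_of_mem i (Finset.mem_univ (g ω)))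
    simp [this]
  rw [← Finset.sum_subset (Finset.subset_univ (Finset.univ.image i))
      (fun d _ hd => by rw [h2 d hd]; simp)]
  rw [Finset.sum_image (fun a _ b _ h => hi h)]
  exact Finset.sum_congr rfl fun c _ => by rw [h1]

lemma entOf_fst {Θ γ : Type*} [Fintype Θ] [Fintype γ] [DecidableEq γ]
    (q : Θ → ℝ) (u : Θ → γ) :
    entOf (fun ω : Θ × Bool => q ω.1 * (1/2 : ℝ)) (fun ω => u ω.1) = entOf q u := by
  unfold entOf ent
  congr 1
  apply Finset.sum_congr rfl
  intro c _
  have : pmfMap (fun ω : Θ × Bool => q ω.1 * (1/2 : ℝ)) (fun ω => u ω.1) c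
      = pmfMap q u c := by
    unfold pmfMap
    rw [Fintype.sum_prod_type]
    simp only [Fintype.sum_bool]
    apply Finset.sum_congr rfl
    intro θ _
    split <;> ring
  rw [this]

lemma entOf_pair_unif {Θ γ : Type*} [Fintype Θ] [Fintype γ] [DecidableEq γ]
    (q : Θ → ℝ) (hq : IsPMF q) (u : Θ → γ) :
    entOf (fun ω : Θ × Bool => q ω.1 * (1/2 : ℝ)) (fun ω => (u ω.1, ω.2))
      = entOf q u + 1 := by
  have hmap : ∀ c b, pmfMap (fun ω : Θ × Bool => q ω.1 * (1/2 : ℝ))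
      (fun ω => (u ω.1, ω.2)) (c, b) = pmfMap q u c * (1/2) := by
    intro c b
    unfold pmfMap
    rw [Fintype.sum_prod_type, Finset.sum_mul]
    apply Finset.sum_congr rfl
    intro θ _
    rcases b <;> simp [Prod.ext_iff] <;> split <;> ring
  unfold entOf ent
  rw [Fintype.sum_prod_type]
  have hterm : ∀ c : γ, ∑ b : Bool, pmfMap (fun ω : Θ × Bool => q ω.1 * (1/2 : ℝ))
      (fun ω => (u ω.1, ω.2)) (c, b) * Real.logb 2 (pmfMap (fun ω : Θ × Bool => q ω.1 * (1/2 : ℝ))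
      (fun ω => (u ω.1, ω.2)) (c, b))
      = pmfMap q u c * Real.logb 2 (pmfMap q u c) - pmfMap q u c := by
    intro c
    simp only [Fintype.sum_bool, hmap]
    set s := pmfMap q u c with hs
    rcases eq_or_lt_of_le (pmfMap_nonneg q hq.1 u c) with h | h
    · rw [show s = (0:ℝ) from hs.trans h.symm]; simp
    · have hs2 : s * (1/2) ≠ 0 := by positivity
      have : Real.logb 2 (s * (1/2)) = Real.logb 2 s - 1 := by
        rw [show s * (1/2 : ℝ) = s / 2 by ring, Real.logb_div (ne_of_gt h) (by norm_num)]
        simp [Real.logb_self_eq_one, hs]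
      rw [this]; ring
  rw [Finset.sum_congr rfl (fun c _ => hterm c), Finset.sum_sub_distrib,
      pmfMap_sum q u, hq.2]
  ring

/-- Degenerate causal relay network example:  `Θ` carries `(X₁, X₃, A₃, A₅)` with any
distribution `q`, independent of `Z` uniform on `{0,1}`;  `Y₅ = Z`, `Y₃ = (X₁, Z)`.
The cut-set bound with code functions gives `I(X₁, A₃; Y₅ | A₅) = 0`, while the weakened
bound `I(X₁, X₃, Y₃; Y₅ | A₅)` equals `1` bit. -/
theorem stmt18 {Θ X1t X3t A3t A5t : Type} [Fintype Θ]
    [Fintype X1t] [DecidableEq X1t] [Fintype X3t] [DecidableEq X3t]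
    [Fintype A3t] [DecidableEq A3t] [Fintype A5t] [DecidableEq A5t]
    (q : Θ → ℝ) (hq : IsPMF q)
    (X1 : Θ → X1t) (X3 : Θ → X3t) (A3 : Θ → A3t) (A5 : Θ → A5t) :
    condMI (fun ω : Θ × Bool => q ω.1 * (1/2 : ℝ))
        (fun ω => (X1 ω.1, A3 ω.1)) (fun ω => ω.2) (fun ω => A5 ω.1) = 0 ∧
    condMI (fun ω : Θ × Bool => q ω.1 * (1/2 : ℝ))
        (fun ω => (X1 ω.1, X3 ω.1, (X1 ω.1, ω.2))) (fun ω => ω.2) (fun ω => A5 ω.1) = 1 := by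
  set p : Θ × Bool → ℝ := fun ω => q ω.1 * (1/2 : ℝ) with hp
  -- H(A5) over the joint space
  have hA5 : entOf p (fun ω : Θ × Bool => A5 ω.1) = entOf q A5 := entOf_fst q A5
  -- H((g,h)) = H(A5) + 1 via swap injection
  have hgh : entOf p (fun ω : Θ × Bool => (ω.2, A5 ω.1)) = entOf q A5 + 1 := by
    have hi : Function.Injective (fun x : A5t × Bool => (x.2, x.1)) := by
      rintro ⟨a, b⟩ ⟨a', b'⟩ h; simp_all
    have h1 : entOf p (fun ω : Θ × Bool => (ω.2, A5 ω.1))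
        = entOf p (fun ω : Θ × Bool => (A5 ω.1, ω.2)) :=
      entOf_comp p (fun ω : Θ × Bool => (A5 ω.1, ω.2)) (fun x : A5t × Bool => (x.2, x.1)) hi
    rw [h1, entOf_pair_unif q hq A5]
  constructor
  · -- first claim
    have hv : entOf p (fun ω : Θ × Bool => ((X1 ω.1, A3 ω.1), A5 ω.1))
        = entOf q (fun θ => ((X1 θ, A3 θ), A5 θ)) :=
      entOf_fst q (fun θ => ((X1 θ, A3 θ), A5 θ))
    have hi : Function.Injective
        (fun x : ((X1t × A3t) × A5t) × Bool => (x.1.1, (x.2, x.1.2))) := by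
      rintro ⟨⟨a, c⟩, z⟩ ⟨⟨a', c'⟩, z'⟩ h; simp_all
    have hfgh : entOf p (fun ω : Θ × Bool => ((X1 ω.1, A3 ω.1), (ω.2, A5 ω.1)))
        = entOf q (fun θ => ((X1 θ, A3 θ), A5 θ)) + 1 := by
      have h1 : entOf p (fun ω : Θ × Bool => ((X1 ω.1, A3 ω.1), (ω.2, A5 ω.1)))
          = entOf p (fun ω : Θ × Bool => (((X1 ω.1, A3 ω.1), A5 ω.1), ω.2)) :=
        entOf_comp p (fun ω : Θ × Bool => (((X1 ω.1, A3 ω.1), A5 ω.1), ω.2)) (fun x : ((X1t × A3t) × A5t) × Bool => (x.1.1, (x.2, x.1.2))) hi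
      rw [h1, entOf_pair_unif q hq (fun θ => ((X1 θ, A3 θ), A5 θ))]
    unfold condMI condEnt
    rw [hv, hA5, hfgh, hgh]
    ring
  · -- second claim
    have hi1 : Function.Injective
        (fun x : (X1t × X3t × A5t) × Bool => ((x.1.1, x.1.2.1, (x.1.1, x.2)), x.1.2.2)) := by
      rintro ⟨⟨a, c, e⟩, z⟩ ⟨⟨a', c', e'⟩, z'⟩ h; simp_all
    have hfh : entOf p (fun ω : Θ × Bool => ((X1 ω.1, X3 ω.1, (X1 ω.1, ω.2)), A5 ω.1))
        = entOf q (fun θ => (X1 θ, X3 θ, A5 θ)) + 1 := by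
      have h1 : entOf p (fun ω : Θ × Bool => ((X1 ω.1, X3 ω.1, (X1 ω.1, ω.2)), A5 ω.1))
          = entOf p (fun ω : Θ × Bool => ((X1 ω.1, X3 ω.1, A5 ω.1), ω.2)) :=
        entOf_comp p (fun ω : Θ × Bool => ((X1 ω.1, X3 ω.1, A5 ω.1), ω.2)) (fun x : (X1t × X3t × A5t) × Bool => ((x.1.1, x.1.2.1, (x.1.1, x.2)), x.1.2.2)) hi1
      rw [h1, entOf_pair_unif q hq (fun θ => (X1 θ, X3 θ, A5 θ))]
    have hi2 : Function.Injective
        (fun x : (X1t × X3t × A5t) × Bool =>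
          ((x.1.1, x.1.2.1, (x.1.1, x.2)), (x.2, x.1.2.2))) := by
      rintro ⟨⟨a, c, e⟩, z⟩ ⟨⟨a', c', e'⟩, z'⟩ h; simp_all
    have hfgh : entOf p
        (fun ω : Θ × Bool => ((X1 ω.1, X3 ω.1, (X1 ω.1, ω.2)), (ω.2, A5 ω.1)))
        = entOf q (fun θ => (X1 θ, X3 θ, A5 θ)) + 1 := by
      have h1 : entOf p
          (fun ω : Θ × Bool => ((X1 ω.1, X3 ω.1, (X1 ω.1, ω.2)), (ω.2, A5 ω.1)))
          = entOf p (fun ω : Θ × Bool => ((X1 ω.1, X3 ω.1, A5 ω.1), ω.2)) :=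
        entOf_comp p (fun ω : Θ × Bool => ((X1 ω.1, X3 ω.1, A5 ω.1), ω.2)) (fun x : (X1t × X3t × A5t) × Bool => ((x.1.1, x.1.2.1, (x.1.1, x.2)), (x.2, x.1.2.2))) hi2
      rw [h1, entOf_pair_unif q hq (fun θ => (X1 θ, X3 θ, A5 θ))]
    unfold condMI condEnt
    rw [hfh, hA5, hfgh, hgh]
    ring
end
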